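/- arXiv:2101.00015 — 4 statements merged into one kernel-verified Lean document; each statement's English description precedes it below -/
import Mathlib

section
/- Let H be an n×n complex matrix that is diagonalizable with real spectrum: there exist an invertible n×n complex matrix W and a diagonal matrix D with real diagonal entries such that H = W D W⁻¹. Then there exists an n×n Hermitian positive-definite matrix η satisfying the quasi-Hermiticity condition Hᴴ = η H η⁻¹ (one may take η = (W Wᴴ)⁻¹). In particular, every finite-dimensional Hamiltonian with unbroken PT symmetry admits a metric operator with respect to which it is Hermitian. -/
open Matrix
open scoped ComplexOrder

/-! Conjugating `W * D * W⁻¹` (with `D` Hermitian) by `η = (W * Wᴴ)⁻¹` gives `Wᴴ⁻¹ * D * Wᴴ`,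
which is its conjugate transpose; and `W * Wᴴ`, hence `η`, is positive definite as `W` is
invertible. -/

namespace Matrix

variable {n R : Type*} [Fintype n] [DecidableEq n] [CommRing R] [StarRing R]

theorem IsHermitian.conjTranspose_mul_mul_nonsing_inv {D W : Matrix n n R} (hD : D.IsHermitian)
    (hW : IsUnit W) :
    (W * D * W⁻¹)ᴴ = (W * Wᴴ)⁻¹ * (W * D * W⁻¹) * (W * Wᴴ)⁻¹⁻¹ := by
  have hWdet : IsUnit W.det := (isUnit_iff_isUnit_det W).1 hW
  have hWWdet : IsUnit (W * Wᴴ).det := (isUnit_iff_isUnit_det _).1 (hW.mul hW.star)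
  rw [nonsing_inv_nonsing_inv _ hWWdet, mul_inv_rev, conjTranspose_mul, conjTranspose_mul,
    conjTranspose_nonsing_inv, hD.eq]
  simp only [Matrix.mul_assoc, nonsing_inv_mul_cancel_left _ _ hWdet]

end Matrix

/-- Every matrix that is diagonalizable with real spectrum (a Hamiltonian with
unbroken PT symmetry), `H = W D W⁻¹` with `W` invertible and `D` a real diagonal matrix,
admits a Hermitian positive-definite metric operator `η` satisfying the quasi-Hermiticity
condition `Hᴴ = η H η⁻¹`. -/
theorem diagonalizable_real_spectrum_admits_metric
    {n : ℕ} (H W : Matrix (Fin n) (Fin n) ℂ) (d : Fin n → ℝ)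
    (hW : IsUnit W)
    (hH : H = W * Matrix.diagonal (fun i => (d i : ℂ)) * W⁻¹) :
    ∃ η : Matrix (Fin n) (Fin n) ℂ, η.PosDef ∧ Hᴴ = η * H * η⁻¹ := by
  have hD : (diagonal fun i => (d i : ℂ)).IsHermitian :=
    isHermitian_diagonal_iff.2 fun i => Complex.conj_ofReal (d i)
  have hη : (W * Wᴴ).PosDef := .mul_conjTranspose_self W (vecMul_injective_iff_isUnit.2 hW)
  exact ⟨(W * Wᴴ)⁻¹, hη.inv, hH ▸ hD.conjTranspose_mul_mul_nonsing_inv hW⟩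
end

section
/- Let η be a 2×2 complex Hermitian matrix whose eigenvalues λ₁, λ₂ satisfy 1 ≥ λ₁ > λ₂ > 0, and let p ∈ [0, 1). Consider the 3×3 Hermitian matrix D := (η ⊕ 1) − (1−p)·I₃, where η ⊕ 1 is the block-diagonal matrix with top-left block η and bottom-right entry 1. Then the sum of the absolute values of the eigenvalues of D (i.e. the trace norm of D) is at least λ₁ − λ₂. Consequently, the verification threshold D_th = (λ₁ − λ₂)/3 separates the honest inner-product-changing channel from any channel of the form ρ ↦ Σⱼ pⱼ (Uⱼ⊕1)ᴴ ρ (Uⱼ⊕1) implemented by a dishonest prover using qubit unitaries and random discarding. -/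
open Matrix
open scoped ComplexOrder

/-!
Let `c = 1 - p`. Extending an eigenvector of `η` by zero gives an eigenvector of `η ⊕ 1`, so
`λ₁ - c` and `λ₂ - c` occur among the eigenvalues of `D` at two distinct indices (they differ
since `λ₁ ≠ λ₂`). Hence the trace norm of `D` is at least
`|λ₁ - c| + |c - λ₂| ≥ λ₁ - λ₂`.
-/

namespace Matrix

variable {𝕜 : Type*} [RCLike 𝕜] {n m : Type*} [Fintype n] [DecidableEq n]

lemma IsHermitian.exists_eigenvalues_eq_of_mulVec_eq_smul {A : Matrix n n 𝕜}
    (hA : A.IsHermitian) {r : ℝ} {x : n → 𝕜} (hx : x ≠ 0) (h : A *ᵥ x = (r : 𝕜) • x) :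
    ∃ i, hA.eigenvalues i = r := by
  have hev : Module.End.HasEigenvalue (toLin' A) (r : 𝕜) :=
    Module.End.hasEigenvalue_of_hasEigenvector
      ⟨Module.End.mem_eigenspace_iff.mpr (by simpa [toLin'_apply] using h), hx⟩
  have hr : r ∈ spectrum ℝ A :=
    spectrum.of_algebraMap_mem 𝕜 (spectrum_toLin' A ▸ hev.mem_spectrum)
  rwa [hA.spectrum_real_eq_range_eigenvalues] at hr

omit [DecidableEq n] in
lemma fromBlocks_zero_mulVec_sum_elim_zero [Fintype m] (A : Matrix n n 𝕜) (B : Matrix m m 𝕜)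
    {v : n → 𝕜} {μ : 𝕜} (h : A *ᵥ v = μ • v) :
    fromBlocks A 0 0 B *ᵥ Sum.elim v 0 = μ • Sum.elim v 0 := by
  rw [fromBlocks_mulVec]
  ext (i | i) <;> simp [h]

lemma IsHermitian.exists_eigenvalues_fromBlocks_sub_smul_one_eq [Fintype m] [DecidableEq m]
    {A : Matrix n n 𝕜} (hA : A.IsHermitian) {B : Matrix m m 𝕜} (c : ℝ)
    (hD : (Matrix.fromBlocks A 0 0 B - (c : 𝕜) • 1).IsHermitian) (j : n) :
    ∃ i, hD.eigenvalues i = hA.eigenvalues j - c := by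
  set v : n → 𝕜 := ⇑(hA.eigenvectorBasis j)
  have hv : v ≠ 0 := by
    simpa [v] using (hA.eigenvectorBasis).toBasis.ne_zero j
  have hx : (Sum.elim v 0 : n ⊕ m → 𝕜) ≠ 0 := fun h0 =>
    hv (funext fun i => by simpa using congrFun h0 (Sum.inl i))
  refine hD.exists_eigenvalues_eq_of_mulVec_eq_smul hx ?_
  have hAv : A *ᵥ v = (hA.eigenvalues j : 𝕜) • v := by
    rw [hA.mulVec_eigenvectorBasis j, RCLike.real_smul_eq_coe_smul (K := 𝕜)]
  rw [sub_mulVec, smul_mulVec, one_mulVec, fromBlocks_zero_mulVec_sum_elim_zero A B hAv]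
  push_cast
  rw [sub_smul]

end Matrix

theorem trace_norm_lower_bound_for_verification_general
    (η : Matrix (Fin 2) (Fin 2) ℂ) (hη : η.IsHermitian) (l1 l2 p : ℝ)
    (hev : hη.eigenvalues 0 = l1 ∧ hη.eigenvalues 1 = l2)
    (h12 : l2 < l1) :
    ∀ hD : ((fromBlocks η 0 0 1 : Matrix (Fin 2 ⊕ Fin 1) (Fin 2 ⊕ Fin 1) ℂ) -
        (((1 - p : ℝ)) : ℂ) • 1).IsHermitian,
      l1 - l2 ≤ ∑ i, |hD.eigenvalues i| := by
  intro hD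
  obtain ⟨i₁, hi₁⟩ := hη.exists_eigenvalues_fromBlocks_sub_smul_one_eq (1 - p) hD 0
  obtain ⟨i₂, hi₂⟩ := hη.exists_eigenvalues_fromBlocks_sub_smul_one_eq (1 - p) hD 1
  rw [hev.1] at hi₁
  rw [hev.2] at hi₂
  have hne : i₁ ≠ i₂ := by
    rintro rfl
    linarith
  calc l1 - l2 ≤ |l1 - (1 - p)| + |(1 - p) - l2| := (le_abs_self _).trans (abs_sub_le _ _ _)
    _ = |hD.eigenvalues i₁| + |hD.eigenvalues i₂| := by rw [hi₁, hi₂, abs_sub_comm (1 - p)]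
    _ ≤ ∑ i, |hD.eigenvalues i| :=
      Finset.add_le_sum (f := fun i => |hD.eigenvalues i|) (fun i _ => abs_nonneg _)
        (Finset.mem_univ _) (Finset.mem_univ _) hne

/-- Let `η` be a `2×2` Hermitian matrix with eigenvalues `1 ≥ l1 > l2 > 0` and
`p ∈ [0,1)`. Then the trace norm (sum of absolute values of eigenvalues) of the Hermitian
matrix `D = (η ⊕ 1) − (1−p)·I₃` is at least `l1 − l2`; this justifies the verification
threshold `D_th = (l1 − l2)/3`. -/
theorem trace_norm_lower_bound_for_verification
    (η : Matrix (Fin 2) (Fin 2) ℂ) (hη : η.IsHermitian) (l1 l2 p : ℝ)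
    (hev : hη.eigenvalues 0 = l1 ∧ hη.eigenvalues 1 = l2)
    (h1 : l1 ≤ 1) (h12 : l2 < l1) (h2 : 0 < l2)
    (hp0 : 0 ≤ p) (hp1 : p < 1) :
    ∀ hD : ((fromBlocks η 0 0 1 : Matrix (Fin 2 ⊕ Fin 1) (Fin 2 ⊕ Fin 1) ℂ) -
        (((1 - p : ℝ)) : ℂ) • 1).IsHermitian,
      l1 - l2 ≤ ∑ i, |hD.eigenvalues i| :=
  trace_norm_lower_bound_for_verification_general η hη l1 l2 p hev h12
end

section
/- Let r, s, φ be real numbers with s > r·sin φ ≥ 0, and define the 2×2 matrices H := [[r·e^{iφ}, s], [s, r·e^{−iφ}]] and η₂ := (s + r·sin φ)⁻¹ · [[s, −i·r·sin φ], [i·r·sin φ, s]]. Then η₂ is Hermitian and positive definite, and it satisfies the quasi-Hermiticity condition for H: Hᴴ η₂ = η₂ H, equivalently Hᴴ = η₂ H η₂⁻¹. -/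
/-!
With `t = r sin φ`, the bracketed matrix in `η₂` is `(s - t) • 1 + t • v vᴴ` for `v = (1, i)`:
a positive multiple of the identity plus a positive semidefinite rank-one matrix, hence
positive definite, and so is its positive multiple `η₂`. The intertwining relation
`Hᴴ η₂ = η₂ H` is an entrywise identity that only uses the shape `H = [[z, s], [s, z̄]]` with
`s` real and `Im z = r sin φ`; inverting the positive definite `η₂` gives `Hᴴ = η₂ H η₂⁻¹`.
-/

open Matrix
open scoped ComplexOrder
open Complex ComplexConjugate

lemma vecMulVec_one_I_star :
    vecMulVec ![1, I] (star ![1, I]) = !![1, -I; I, 1] := by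
  ext i j; fin_cases i <;> fin_cases j <;> simp [vecMulVec_apply]

lemma posDef_fin_two_of_nonneg_of_lt {s t : ℝ} (ht : 0 ≤ t) (hts : t < s) :
    !![(s : ℂ), -(I * t); I * t, s].PosDef := by
  have hdecomp : !![(s : ℂ), -(I * t); I * t, s] =
      ((s - t : ℝ) : ℂ) • (1 : Matrix (Fin 2) (Fin 2) ℂ) +
        (t : ℂ) • vecMulVec ![1, I] (star ![1, I]) := by
    rw [vecMulVec_one_I_star]
    ext i j; fin_cases i <;> fin_cases j <;> simp <;> ring
  rw [hdecomp]
  exact (PosDef.one.smul (by exact_mod_cast sub_pos.2 hts)).add_posSemidef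
    ((posSemidef_vecMulVec_self_star _).smul (by exact_mod_cast ht))

lemma conjTranspose_mul_metric_eq_metric_mul (z : ℂ) (s : ℝ) :
    !![z, (s : ℂ); s, conj z]ᴴ * !![(s : ℂ), -(I * z.im); I * z.im, s] =
      !![(s : ℂ), -(I * z.im); I * z.im, s] * !![z, (s : ℂ); s, conj z] := by
  ext i j; fin_cases i <;> fin_cases j <;>
    simp [Matrix.mul_apply, Fin.sum_univ_two, Complex.ext_iff] <;> constructor <;> ring

lemma conj_ofReal_mul_exp (r φ : ℝ) : conj ((r : ℂ) * exp (I * φ)) = r * exp (-(I * φ)) := by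
  rw [map_mul, conj_ofReal, ← exp_conj, map_mul, conj_I, conj_ofReal, neg_mul]

lemma im_ofReal_mul_exp (r φ : ℝ) : ((r : ℂ) * exp (I * φ)).im = r * Real.sin φ := by
  rw [mul_comm I, exp_mul_I]; simp [← ofReal_cos, ← ofReal_sin]

/-- For reals `r, s, φ` with `s > r·sin φ ≥ 0`, the Bender–Brody–Jones
PT-symmetric Hamiltonian `H = [[re^{iφ}, s], [s, re^{−iφ}]]` admits the metric operator
`η₂ = (s + r sin φ)⁻¹ [[s, −ir sin φ], [ir sin φ, s]]`, which is Hermitian positive-definite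
and satisfies the quasi-Hermiticity condition `Hᴴ η₂ = η₂ H`, equivalently `Hᴴ = η₂ H η₂⁻¹`. -/
theorem bbj_metric_operator
    (r s φ : ℝ) (h1 : r * Real.sin φ < s) (h2 : 0 ≤ r * Real.sin φ) :
    (((((s + r * Real.sin φ)⁻¹ : ℝ) : ℂ) •
        !![(s : ℂ), -(Complex.I * (r * Real.sin φ : ℝ));
           Complex.I * (r * Real.sin φ : ℝ), (s : ℂ)]).PosDef) ∧
    (!![(r : ℂ) * Complex.exp (Complex.I * φ), (s : ℂ);
        (s : ℂ), (r : ℂ) * Complex.exp (-(Complex.I * φ))]ᴴ *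
      ((((s + r * Real.sin φ)⁻¹ : ℝ) : ℂ) •
        !![(s : ℂ), -(Complex.I * (r * Real.sin φ : ℝ));
           Complex.I * (r * Real.sin φ : ℝ), (s : ℂ)]) =
     ((((s + r * Real.sin φ)⁻¹ : ℝ) : ℂ) •
        !![(s : ℂ), -(Complex.I * (r * Real.sin φ : ℝ));
           Complex.I * (r * Real.sin φ : ℝ), (s : ℂ)]) *
      !![(r : ℂ) * Complex.exp (Complex.I * φ), (s : ℂ);
         (s : ℂ), (r : ℂ) * Complex.exp (-(Complex.I * φ))]) ∧
    (!![(r : ℂ) * Complex.exp (Complex.I * φ), (s : ℂ);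
        (s : ℂ), (r : ℂ) * Complex.exp (-(Complex.I * φ))]ᴴ =
     ((((s + r * Real.sin φ)⁻¹ : ℝ) : ℂ) •
        !![(s : ℂ), -(Complex.I * (r * Real.sin φ : ℝ));
           Complex.I * (r * Real.sin φ : ℝ), (s : ℂ)]) *
      !![(r : ℂ) * Complex.exp (Complex.I * φ), (s : ℂ);
         (s : ℂ), (r : ℂ) * Complex.exp (-(Complex.I * φ))] *
      ((((s + r * Real.sin φ)⁻¹ : ℝ) : ℂ) •
        !![(s : ℂ), -(Complex.I * (r * Real.sin φ : ℝ));
           Complex.I * (r * Real.sin φ : ℝ), (s : ℂ)])⁻¹) := by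
  have hc : (0 : ℂ) < ((s + r * Real.sin φ)⁻¹ : ℝ) := by
    exact_mod_cast inv_pos.2 (by linarith)
  have hη := (posDef_fin_two_of_nonneg_of_lt h2 h1).smul hc
  have hM := conjTranspose_mul_metric_eq_metric_mul (r * exp (I * φ)) s
  rw [conj_ofReal_mul_exp, im_ofReal_mul_exp] at hM
  have hH := congrArg ((((s + r * Real.sin φ)⁻¹ : ℝ) : ℂ) • ·) hM
  rw [← Matrix.mul_smul, ← Matrix.smul_mul] at hH
  refine ⟨hη, hH, ?_⟩
  rw [← hH, mul_nonsing_inv_cancel_right _ _ ((isUnit_iff_isUnit_det _).1 hη.isUnit)]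
end

section
/- Let r, s, φ be real numbers with s > r·sin φ ≥ 0, let H := [[r·e^{iφ}, s], [s, r·e^{−iφ}]], let η₂ := (s + r·sin φ)⁻¹ · [[s, −i·r·sin φ], [i·r·sin φ, s]], and let S be the positive-definite square root of η₂. Then the equivalent Hermitian Hamiltonian h := S H S⁻¹ is given explicitly by h = [[r·cos φ, √(s² − r²·sin²φ)], [√(s² − r²·sin²φ), r·cos φ]]; i.e. S·H = h·S, and h is a real symmetric (hence Hermitian) matrix. -/
open Matrix
open scoped ComplexOrder

/-- The Bender–Brody–Jones 2×2 PT-symmetric Hamiltonian `H = [[re^{iφ}, s], [s, re^{−iφ}]]`. -/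
noncomputable def bbjH (r s φ : ℝ) : Matrix (Fin 2) (Fin 2) ℂ :=
  !![(r : ℂ) * Complex.exp (Complex.I * φ), (s : ℂ);
     (s : ℂ), (r : ℂ) * Complex.exp (-(Complex.I * φ))]

/-- The metric operator `η₂ = (s + r sin φ)⁻¹ [[s, −ir sin φ], [ir sin φ, s]]` for `bbjH`. -/
noncomputable def bbjEta (r s φ : ℝ) : Matrix (Fin 2) (Fin 2) ℂ :=
  (((s + r * Real.sin φ)⁻¹ : ℝ) : ℂ) •
    !![(s : ℂ), -(Complex.I * (r * Real.sin φ : ℝ));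
       Complex.I * (r * Real.sin φ : ℝ), (s : ℂ)]

/-- The equivalent Hermitian Hamiltonian
`h = [[r cos φ, √(s² − r² sin²φ)], [√(s² − r² sin²φ), r cos φ]]`. -/
noncomputable def bbjh (r s φ : ℝ) : Matrix (Fin 2) (Fin 2) ℂ :=
  !![((r * Real.cos φ : ℝ) : ℂ), ((Real.sqrt (s ^ 2 - r ^ 2 * Real.sin φ ^ 2) : ℝ) : ℂ);
     ((Real.sqrt (s ^ 2 - r ^ 2 * Real.sin φ ^ 2) : ℝ) : ℂ), ((r * Real.cos φ : ℝ) : ℂ)]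

/-!
In terms of the spectral projections `P± = (1 ± σ_y)/2` of the Pauli matrix `σ_y`, and with
`a = r sin φ`, the metric is `η₂ = P₊ + ((s - a)/(s + a)) P₋`. Hence `P₊ + q P₋` with
`q = √(s² - a²)/(s + a) ≥ 0` is a positive semidefinite square root of `η₂`, and by uniqueness of
such square roots it is `S`. The intertwining `S H = h S` is then a direct `2 × 2` computation that
only uses `q² (s + a) = s - a`.
-/

open Complex (I)

/-- `sigmaYDiag x y = x P₊ + y P₋`, where `P± = (1 ± σ_y)/2` project onto the eigenvectors
`(1, ±i)` of the Pauli matrix `σ_y`. -/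
noncomputable def sigmaYDiag (x y : ℂ) : Matrix (Fin 2) (Fin 2) ℂ :=
  !![(x + y) / 2, -I * (x - y) / 2; I * (x - y) / 2, (x + y) / 2]

lemma sigmaYDiag_mul_sigmaYDiag (x y x' y' : ℂ) :
    sigmaYDiag x y * sigmaYDiag x' y' = sigmaYDiag (x * x') (y * y') := by
  ext i j
  fin_cases i <;> fin_cases j <;> simp [sigmaYDiag]
  · linear_combination (-(x - y) * (x' - y') / 4) * Complex.I_sq
  · ring
  · ring
  · linear_combination (-(x - y) * (x' - y') / 4) * Complex.I_sq

lemma sigmaYDiag_eq_smul_add_smul (x y : ℂ) :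
    sigmaYDiag x y = (x / 2) • vecMulVec ![1, I] (star ![1, I])
      + (y / 2) • vecMulVec ![1, -I] (star ![1, -I]) := by
  ext i j
  fin_cases i <;> fin_cases j <;> simp [sigmaYDiag, vecMulVec] <;> ring

lemma sigmaYDiag_posSemidef {x y : ℝ} (hx : 0 ≤ x) (hy : 0 ≤ y) :
    (sigmaYDiag x y).PosSemidef := by
  rw [sigmaYDiag_eq_smul_add_smul]
  exact ((posSemidef_vecMulVec_self_star _).smul (by positivity)).add
    ((posSemidef_vecMulVec_self_star _).smul (by positivity))

lemma sigmaYDiag_mul_eq_mul_sigmaYDiag {c a s q : ℂ} (hq : q ^ 2 * (s + a) = s - a) :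
    sigmaYDiag 1 q * !![c + I * a, s; s, c - I * a] =
      !![c, q * (s + a); q * (s + a), c] * sigmaYDiag 1 q := by
  ext i j
  fin_cases i <;> fin_cases j <;> simp [sigmaYDiag]
  · linear_combination (I / 2) * hq
  · linear_combination (-1 / 2) * hq + ((1 - q) * a / 2) * Complex.I_sq
  · linear_combination (-1 / 2) * hq + ((1 - q) * a / 2) * Complex.I_sq
  · linear_combination (-I / 2) * hq

lemma Matrix.PosSemidef.eq_of_mul_self_eq {n 𝕜 : Type*} [Fintype n] [DecidableEq n] [RCLike 𝕜]
    {A B : Matrix n n 𝕜} (hA : A.PosSemidef) (hB : B.PosSemidef) (h : A * A = B * B) :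
    A = B := by
  open scoped MatrixOrder in
  exact (CFC.mul_self_eq_mul_self_iff A B hA.nonneg hB.nonneg).mp h

lemma sqrt_sq_sub_sq_div_add_sq_mul {a s : ℝ} (h₁ : a ≤ s) (h₂ : 0 < s + a) :
    (√(s ^ 2 - a ^ 2) / (s + a)) ^ 2 * (s + a) = s - a := by
  rw [div_pow, Real.sq_sqrt (by nlinarith)]
  field_simp
  ring

lemma bbjH_eq (r s φ : ℝ) :
    bbjH r s φ = !![(r * Real.cos φ : ℝ) + I * (r * Real.sin φ : ℝ), (s : ℂ);
      (s : ℂ), (r * Real.cos φ : ℝ) - I * (r * Real.sin φ : ℝ)] := by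
  rw [bbjH, mul_comm I, Complex.exp_mul_I, ← neg_mul, Complex.exp_mul_I]
  push_cast
  simp only [Complex.cos_neg, Complex.sin_neg]
  ring_nf

lemma bbjEta_eq_sigmaYDiag {r s φ : ℝ} (h : s + r * Real.sin φ ≠ 0) :
    bbjEta r s φ = sigmaYDiag 1 ((s - r * Real.sin φ) / (s + r * Real.sin φ) : ℝ) := by
  ext i j
  have h' : (s : ℂ) + r * Complex.sin φ ≠ 0 := by exact_mod_cast h
  fin_cases i <;> fin_cases j <;> simp [bbjEta, sigmaYDiag] <;> field_simp <;> ring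

lemma bbjh_isHermitian (r s φ : ℝ) : (bbjh r s φ).IsHermitian := by
  ext i j
  fin_cases i <;> fin_cases j <;> simp [bbjh, -Complex.ofReal_cos]

noncomputable def bbjSqrtEta (r s φ : ℝ) : Matrix (Fin 2) (Fin 2) ℂ :=
  sigmaYDiag 1 (√(s ^ 2 - r ^ 2 * Real.sin φ ^ 2) / (s + r * Real.sin φ) : ℝ)

section

variable {r s φ : ℝ}

lemma bbjSqrtEta_posSemidef (h : 0 < s + r * Real.sin φ) : (bbjSqrtEta r s φ).PosSemidef :=
  sigmaYDiag_posSemidef zero_le_one (by positivity)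

lemma bbjSqrtEta_mul_self (h₁ : r * Real.sin φ ≤ s) (h₂ : 0 < s + r * Real.sin φ) :
    bbjSqrtEta r s φ * bbjSqrtEta r s φ = bbjEta r s φ := by
  have hq := sqrt_sq_sub_sq_div_add_sq_mul h₁ h₂
  rw [mul_pow] at hq
  rw [bbjSqrtEta, sigmaYDiag_mul_sigmaYDiag, bbjEta_eq_sigmaYDiag h₂.ne', one_mul,
    ← Complex.ofReal_mul, ← sq]
  congr 2
  rw [eq_div_iff h₂.ne', hq]

lemma bbjSqrtEta_mul_bbjH (h₁ : r * Real.sin φ ≤ s) (h₂ : 0 < s + r * Real.sin φ) :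
    bbjSqrtEta r s φ * bbjH r s φ = bbjh r s φ * bbjSqrtEta r s φ := by
  have hq := sqrt_sq_sub_sq_div_add_sq_mul h₁ h₂
  rw [mul_pow] at hq
  set q := √(s ^ 2 - r ^ 2 * Real.sin φ ^ 2) / (s + r * Real.sin φ)
  have hw : ((√(s ^ 2 - r ^ 2 * Real.sin φ ^ 2) : ℝ) : ℂ) = q * (s + (r * Real.sin φ : ℝ)) := by
    rw [← Complex.ofReal_add, ← Complex.ofReal_mul]
    exact congrArg _ (div_mul_cancel₀ _ h₂.ne').symm
  rw [bbjh, hw, bbjSqrtEta, bbjH_eq]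
  exact sigmaYDiag_mul_eq_mul_sigmaYDiag (by exact_mod_cast hq)

end

/-- For `s > r sin φ ≥ 0` and `S` the positive-definite square root of the
metric operator `η₂` of the Bender–Brody–Jones Hamiltonian `H`, the equivalent Hermitian
Hamiltonian `S H S⁻¹` equals `h = [[r cos φ, √(s²−r² sin²φ)], [√(s²−r² sin²φ), r cos φ]]`;
i.e. `S·H = h·S`, and `h` is Hermitian. -/
theorem bbj_equivalent_hermitian_hamiltonian
    (r s φ : ℝ) (h1 : r * Real.sin φ < s) (h2 : 0 ≤ r * Real.sin φ)
    (S : Matrix (Fin 2) (Fin 2) ℂ) (hS : S.PosDef) (hS2 : S * S = bbjEta r s φ) :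
    S * bbjH r s φ * S⁻¹ = bbjh r s φ ∧
    S * bbjH r s φ = bbjh r s φ * S ∧
    (bbjh r s φ).IsHermitian := by
  have hle : r * Real.sin φ ≤ s := h1.le
  have hpos : 0 < s + r * Real.sin φ := by linarith
  have hS_eq : S = bbjSqrtEta r s φ :=
    hS.posSemidef.eq_of_mul_self_eq (bbjSqrtEta_posSemidef hpos)
      (hS2.trans (bbjSqrtEta_mul_self hle hpos).symm)
  have hSH : S * bbjH r s φ = bbjh r s φ * S := hS_eq ▸ bbjSqrtEta_mul_bbjH hle hpos
  refine ⟨?_, hSH, bbjh_isHermitian r s φ⟩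
  rw [hSH, mul_nonsing_inv_cancel_right _ _ ((isUnit_iff_isUnit_det S).mp hS.isUnit)]
end
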